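/- arXiv:2205.15127 — 2 statements merged into one kernel-verified Lean document; each statement's English description precedes it below -/
import Mathlib

section
/- For the residual linear GCN H^{l+1} = H^l + P H^l W^{l+1}, the derivative of H^L with respect to H^l (as a linear map) is X ↦ ∑_{S ⊆ {l+1,…,L}} P^{|S|} X ∏_{j∈S} W^j; equivalently, the backward sensitivity is a sum over all residual paths from layer l to layer L. -/
lemma sort_append_max {b : ℕ} {S : Finset ℕ} (h : ∀ a ∈ S, a < b) :
    (insert b S).sort (· ≤ ·) = S.sort (· ≤ ·) ++ [b] := by
  have hb : b ∉ S := fun hb => lt_irrefl b (h b hb)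
  refine (fun hp h1 h2 => List.Perm.eq_of_pairwise' (r := (· ≤ ·)) h1 h2 hp) ?_ ?_ ?_
  · rw [← Multiset.coe_eq_coe]
    have h1 : ((insert b S).sort (· ≤ ·) : Multiset ℕ) = b ::ₘ S.val := by
      rw [Finset.sort_eq, Finset.insert_val, Multiset.ndinsert_of_notMem hb]
    have h2 : ((S.sort (· ≤ ·) ++ [b] : List ℕ) : Multiset ℕ) = b ::ₘ S.val := by
      have : ((S.sort (· ≤ ·) ++ [b] : List ℕ) : Multiset ℕ)
          = (S.sort (· ≤ ·) : Multiset ℕ) + ([b] : List ℕ) := by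
        exact_mod_cast rfl
      rw [this, Finset.sort_eq]
      rw [add_comm]
      simp
    rw [h1, h2]
  · exact Finset.pairwise_sort _ _
  · rw [List.pairwise_append]
    refine ⟨Finset.pairwise_sort _ _, List.pairwise_singleton _ b, ?_⟩
    intro a ha c hc
    simp at hc
    subst hc
    exact (h a ((Finset.mem_sort _).mp ha)).le

theorem stmt_16 {n d : ℕ}
    (P : Matrix (Fin n) (Fin n) ℝ)
    (W : ℕ → Matrix (Fin d) (Fin d) ℝ)
    (l L : ℕ) (hlL : l ≤ L)
    (F : ℕ → Matrix (Fin n) (Fin d) ℝ → Matrix (Fin n) (Fin d) ℝ)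
    (hF0 : ∀ X, F l X = X)
    (hFs : ∀ m, l ≤ m → ∀ X, F (m + 1) X = F m X + P * F m X * W (m + 1)) :
    ∀ X, F L X = ∑ S ∈ (Finset.Icc (l + 1) L).powerset,
      P ^ S.card * X * ((S.sort (· ≤ ·)).map W).prod := by
  induction L, hlL using Nat.le_induction with
  | base =>
    intro X
    rw [hF0]
    simp [Finset.Icc_eq_empty_of_lt (Nat.lt_succ_self l)]
  | succ M hM IH =>
    intro X
    have hnot : M + 1 ∉ Finset.Icc (l + 1) M := by simp
    have hIcc : Finset.Icc (l + 1) (M + 1) = insert (M + 1) (Finset.Icc (l + 1) M) := by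
      exact (Finset.insert_Icc_right_eq_Icc_add_one (Nat.succ_le_succ hM)).symm
    rw [hFs M hM X, IH X, hIcc, Finset.sum_powerset_insert hnot]
    congr 1
    rw [Matrix.mul_sum, Matrix.sum_mul]
    apply Finset.sum_congr rfl
    intro S hS
    have hSsub := Finset.mem_powerset.mp hS
    have hlt : ∀ a ∈ S, a < M + 1 := fun a ha =>
      Nat.lt_succ_of_le (Finset.mem_Icc.mp (hSsub ha)).2
    have hbS : M + 1 ∉ S := fun h => lt_irrefl _ (hlt _ h)
    rw [Finset.card_insert_of_notMem hbS, sort_append_max hlt]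
    rw [List.map_append, List.prod_append, pow_succ]
    simp only [Matrix.mul_assoc]
    rw [← Matrix.mul_assoc P (P ^ S.card), ← Matrix.mul_assoc (P ^ S.card) P, pow_mul_comm']
    simp
end

section
/- In the DRIVE recursion H^{l+1} = H^l + α_l P H^l W^{l+1} (with scalars α_l), the output is H^L = ∑_{S ⊆ {0,…,L-1}} (∏_{l∈S} α_l) P^{|S|} H^0 ∏_{l∈S} W^{l+1}, i.e., the residual path decomposition where each path of layer-set S is reweighted by ∏_{l∈S} α_l. -/
lemma sort_insert_max {S : Finset ℕ} {L : ℕ} (h : ∀ b ∈ S, b < L) :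
    (insert L S).sort (· ≤ ·) = S.sort (· ≤ ·) ++ [L] := by
  have hL : L ∉ S := fun hm => lt_irrefl L (h L hm)
  refine (fun hp h1 h2 => List.Perm.eq_of_pairwise' (r := (· ≤ ·)) h1 h2 hp) ?_ ?_ ?_
  · refine List.Perm.trans (Multiset.coe_eq_coe.mp ?_) (List.perm_append_singleton _ _).symm
    rw [Finset.sort_eq, Finset.insert_val, Multiset.ndinsert_of_notMem hL]
    rw [← Multiset.cons_coe, Finset.sort_eq]
  · exact Finset.pairwise_sort _ _
  · rw [List.pairwise_append]
    refine ⟨Finset.pairwise_sort _ _, List.pairwise_singleton _ _, ?_⟩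
    intro a ha b hb
    simp at hb
    subst hb
    exact le_of_lt (h a ((Finset.mem_sort _).mp ha))

theorem stmt_18 {n d : ℕ}
    (P : Matrix (Fin n) (Fin n) ℝ)
    (W : ℕ → Matrix (Fin d) (Fin d) ℝ)
    (α : ℕ → ℝ)
    (H : ℕ → Matrix (Fin n) (Fin d) ℝ)
    (hrec : ∀ l, H (l + 1) = H l + α l • (P * H l * W (l + 1))) (L : ℕ) :
    H L = ∑ S ∈ (Finset.range L).powerset,
      (∏ l ∈ S, α l) •
        (P ^ S.card * H 0 * ((S.sort (· ≤ ·)).map (fun l => W (l + 1))).prod) := by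
  induction L with
  | zero => simp
  | succ L ih =>
    rw [hrec L, ih, Finset.range_add_one,
      Finset.sum_powerset_insert (Finset.notMem_range_self)]
    congr 1
    rw [Matrix.mul_sum, Matrix.sum_mul, Finset.smul_sum]
    refine Finset.sum_congr rfl ?_
    intro S hS
    rw [Finset.mem_powerset] at hS
    have hLS : L ∉ S := fun h => Finset.notMem_range_self (hS h)
    have hlt : ∀ b ∈ S, b < L := fun b hb => Finset.mem_range.mp (hS hb)
    rw [Finset.prod_insert hLS, Finset.card_insert_of_notMem hLS,
      sort_insert_max hlt]
    simp only [List.map_append, List.prod_append, List.map_cons, List.map_nil,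
      List.prod_cons, List.prod_nil, mul_one]
    rw [pow_succ']
    simp only [Matrix.mul_smul, Matrix.smul_mul, smul_smul]
    ring_nf
    simp [Matrix.mul_assoc]
end
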